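/- Let L ≅ C_{n_1} ⊕ ⋯ ⊕ C_ℓ with 1 < n_1 ∣ ⋯ ∣ n_ℓ, and let n ≥ 1 with exp(L) ∣ n, r ≥ 1. Then D(L ⊕ C_n^r) ≤ r(n − 1) + 1 + (c_{ℓ+r} − r)(n/P(n) − 1) + (n/P(n))·∑_{i=1}^ℓ (gcd(n_i, P(n)) − 1), where c_{ℓ+r} ≥ r is a constant with η(C_m^{ℓ+r}) ≤ c_{ℓ+r}(m − 1) + 1 for all m ≥ 1. -/

import Mathlib

open Multiset Finset Filter

/-- The Davenport constant: smallest `t ≥ 1` such that every multiset of `t` or more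
elements of `G` has a non-empty zero-sum sub-multiset. -/
noncomputable def DavCon (G : Type*) [AddCommGroup G] : ℕ :=
  sInf {t : ℕ | 1 ≤ t ∧ ∀ S : Multiset G, t ≤ Multiset.card S →
    ∃ T, T ≤ S ∧ T ≠ 0 ∧ T.sum = 0}

/-- The η-invariant: smallest `t ≥ 1` such that every multiset of `t` or more elements of `G`
has a non-empty zero-sum sub-multiset of length at most `exp G`. -/
noncomputable def EtaCon (G : Type*) [AddCommGroup G] : ℕ :=
  sInf {t : ℕ | 1 ≤ t ∧ ∀ S : Multiset G, t ≤ Multiset.card S →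
    ∃ T, T ≤ S ∧ T ≠ 0 ∧ Multiset.card T ≤ AddMonoid.exponent G ∧ T.sum = 0}

/-- `maxPP n` is the greatest prime power dividing `n`, with `maxPP 1 = 1`. -/
def maxPP (n : ℕ) : ℕ := WithBot.unbotD 1 ((n.divisors).filter IsPrimePow).max

/-!
Write `P = maxPP n = p ^ a` and `q = n / P`, so that `q` and `P` are coprime, and view
`L ⊕ C_n^r` as `G = ⊕_k C_{M_k}` with every `M_k ∣ q P`. Reducing each coordinate modulo
`gcd(M_k, q)` and embedding the result in `C_q` gives `Ψ : G → C_q^{ℓ+r}`; the bound on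
`η(C_q^{ℓ+r})` turns any `c(q-1)+1` terms into a block of at most `q` terms with sum in
`H = ker Ψ`, so `q (D' - 1) + c(q-1) + 1` terms contain `D'` disjoint such blocks, where
`D' = ∑_k (gcd(M_k, P) - 1) + 1`. Reduction modulo `gcd(M_k, P)` is injective on `H` (by the
Chinese remainder theorem) and lands in a `p`-group, whose Davenport constant is at most `D'` by
Olson's group-ring argument; hence some nonempty set of blocks has zero total sum.
-/

def DavenportBound (G : Type*) [AddCommGroup G] (k : ℕ) : Prop :=
  ∀ S : Multiset G, k ≤ card S → ∃ T ≤ S, T ≠ 0 ∧ T.sum = 0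

theorem davCon_le_of_davenportBound {G : Type*} [AddCommGroup G] {k : ℕ} (hk : 1 ≤ k)
    (h : DavenportBound G k) : DavCon G ≤ k :=
  Nat.sInf_le ⟨hk, h⟩

theorem Multiset.exists_le_map_eq_of_le_map {α β : Type*} (f : α → β) {S : Multiset α}
    {T' : Multiset β} (h : T' ≤ S.map f) : ∃ T ≤ S, T.map f = T' := by
  induction T' using Multiset.induction generalizing S with
  | empty => exact ⟨0, Multiset.zero_le _, rfl⟩
  | cons b U ih =>
    obtain ⟨x, hx, rfl⟩ := Multiset.mem_map.mp (Multiset.mem_of_le h (Multiset.mem_cons_self _ _))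
    obtain ⟨S, rfl⟩ := Multiset.exists_cons_of_mem hx
    rw [Multiset.map_cons, Multiset.cons_le_cons_iff] at h
    obtain ⟨T, hT, rfl⟩ := ih h
    exact ⟨x ::ₘ T, Multiset.cons_le_cons _ hT, Multiset.map_cons _ _ _⟩

theorem DavenportBound.of_injective {G K : Type*} [AddCommGroup G] [AddCommGroup K] {k : ℕ}
    (f : G →+ K) (hf : Function.Injective f) (h : DavenportBound K k) : DavenportBound G k := by
  intro S hS
  obtain ⟨T', hT'S, hT'0, hT'sum⟩ := h (S.map f) (by rwa [Multiset.card_map])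
  obtain ⟨T, hTS, rfl⟩ := Multiset.exists_le_map_eq_of_le_map f hT'S
  refine ⟨T, hTS, by rintro rfl; exact hT'0 rfl, hf ?_⟩
  rw [map_multiset_sum, hT'sum, _root_.map_zero]

theorem exists_short_zeroSum_of_etaCon_le {A : Type*} [AddCommGroup A] [Finite A] {B : ℕ}
    (hB : EtaCon A ≤ B) {S : Multiset A} (hS : B ≤ card S) :
    ∃ T ≤ S, T ≠ 0 ∧ card T ≤ AddMonoid.exponent A ∧ T.sum = 0 := by
  classical
  have := Fintype.ofFinite A
  set e := AddMonoid.exponent A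
  suffices hne : Fintype.card A * e ∈ {t : ℕ | 1 ≤ t ∧ ∀ S : Multiset A, t ≤ card S →
      ∃ T, T ≤ S ∧ T ≠ 0 ∧ card T ≤ e ∧ T.sum = 0} from
    (Nat.sInf_mem ⟨_, hne⟩).2 S (hB.trans hS)
  refine ⟨Nat.one_le_iff_ne_zero.mpr (mul_ne_zero Fintype.card_ne_zero
    AddMonoid.exponent_ne_zero_of_finite), fun S hS => ?_⟩
  obtain ⟨g, -, hg⟩ : ∃ g ∈ Finset.univ, e ≤ S.count g := by
    refine Finset.exists_le_of_sum_le Finset.univ_nonempty ?_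
    rwa [Finset.sum_const, Finset.card_univ, smul_eq_mul,
      Multiset.sum_count_eq_card fun a _ => Finset.mem_univ a]
  refine ⟨Multiset.replicate e g, Multiset.le_count_iff_replicate_le.mp hg, ?_, by simp, ?_⟩
  · exact fun h => AddMonoid.exponent_ne_zero_of_finite (G := A)
      (by simpa using congrArg Multiset.card h)
  · rw [Multiset.sum_replicate, AddMonoid.exponent_nsmul_eq_zero]

theorem exists_short_sum_mem_ker_of_etaCon_le {G K : Type*} [AddCommGroup G] [AddCommGroup K]
    [Finite K] (Ψ : G →+ K) {B : ℕ} (hB : EtaCon K ≤ B) {S : Multiset G} (hS : B ≤ card S) :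
    ∃ T ≤ S, T ≠ 0 ∧ card T ≤ AddMonoid.exponent K ∧ T.sum ∈ Ψ.ker := by
  obtain ⟨T', hT'S, hT'0, hT'card, hT'sum⟩ :=
    exists_short_zeroSum_of_etaCon_le hB (S := S.map Ψ) (by rwa [Multiset.card_map])
  obtain ⟨T, hTS, rfl⟩ := Multiset.exists_le_map_eq_of_le_map Ψ hT'S
  refine ⟨T, hTS, by rintro rfl; exact hT'0 rfl, by rwa [Multiset.card_map] at hT'card, ?_⟩
  rw [AddMonoidHom.mem_ker, map_multiset_sum, hT'sum]

theorem AddMonoid.exponent_fun_zmod_le {κ : Type*} {q : ℕ} (hq : q ≠ 0) :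
    AddMonoid.exponent (κ → ZMod q) ≤ q :=
  Nat.le_of_dvd (Nat.pos_of_ne_zero hq) <|
    AddMonoid.exponent_dvd_of_forall_nsmul_eq_zero fun x => funext fun k => by simp

theorem exists_disjoint_blocks {G : Type*} [AddCommGroup G] (H : AddSubgroup G) {q E : ℕ}
    (hshort : ∀ S : Multiset G, E ≤ card S → ∃ T ≤ S, T ≠ 0 ∧ card T ≤ q ∧ T.sum ∈ H)
    (j : ℕ) {S : Multiset G} (hS : q * j + E ≤ card S) :
    ∃ Ts : Multiset (Multiset G), card Ts = j + 1 ∧ Ts.join ≤ S ∧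
      ∀ T ∈ Ts, T ≠ 0 ∧ T.sum ∈ H := by
  classical
  induction j generalizing S with
  | zero =>
    obtain ⟨T, hTS, hT0, -, hTH⟩ := hshort S (by simpa using hS)
    exact ⟨{T}, rfl, by simpa using hTS, by simpa using ⟨hT0, hTH⟩⟩
  | succ j ih =>
    obtain ⟨T, hTS, hT0, hTq, hTH⟩ := hshort S (le_of_add_le_right hS)
    have hcard : q * j + E ≤ card (S - T) := by
      rw [Multiset.card_sub hTS]
      have := Multiset.card_le_card hTS
      rw [Nat.mul_succ] at hS
      omega
    obtain ⟨Ts, hcardTs, hTsS, hTs⟩ := ih hcard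
    refine ⟨T ::ₘ Ts, by rw [Multiset.card_cons, hcardTs], ?_, ?_⟩
    · rw [Multiset.join_cons]
      calc T + Ts.join ≤ T + (S - T) := add_le_add_right hTsS T
        _ = S := add_tsub_cancel_of_le hTS
    · simpa [hT0, hTH] using hTs

theorem DavenportBound.of_blocks {G : Type*} [AddCommGroup G] (H : AddSubgroup G) {q E k : ℕ}
    (hshort : ∀ S : Multiset G, E ≤ card S → ∃ T ≤ S, T ≠ 0 ∧ card T ≤ q ∧ T.sum ∈ H)
    (hH : DavenportBound H k) : DavenportBound G (q * (k - 1) + E) := by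
  intro S hS
  obtain _ | j := k
  · obtain ⟨T, hT, hT0, -⟩ := hH 0 le_rfl
    exact absurd (Multiset.le_zero.mp hT) hT0
  obtain ⟨Ts, hcard, hTsS, hTs⟩ := exists_disjoint_blocks H hshort j hS
  let blockSum : {T // T ∈ Ts} → H := fun T => ⟨T.1.sum, (hTs T.1 T.2).2⟩
  obtain ⟨V, hV, hV0, hVsum⟩ := hH (Ts.attach.map blockSum) (by simp [hcard])
  obtain ⟨Us, hUs, rfl⟩ := Multiset.exists_le_map_eq_of_le_map blockSum hV
  have hUsTs : Us.map Subtype.val ≤ Ts := by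
    simpa using Multiset.map_le_map (f := Subtype.val) hUs
  refine ⟨(Us.map Subtype.val).join, ?_, ?_, ?_⟩
  · obtain ⟨u, hu⟩ := Multiset.le_iff_exists_add.mp hUsTs
    have hjoin := congrArg Multiset.join hu
    rw [Multiset.join_add] at hjoin
    exact le_trans (hjoin ▸ Multiset.le_add_right _ _) hTsS
  · obtain ⟨T, hT⟩ := Multiset.exists_mem_of_ne_zero (by simpa using hV0)
    refine fun h => (hTs T.1 T.2).1 (Multiset.le_zero.mp ?_)
    rw [← h]
    exact Multiset.le_sum_of_mem (Multiset.mem_map_of_mem _ hT)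
  · rw [Multiset.sum_join, Multiset.map_map]
    simpa [AddSubgroup.val_multiset_sum, Function.comp_def, blockSum] using
      congrArg Subtype.val hVsum

theorem Ideal.span_range_pow_eq_bot {R ι : Type*} [CommRing R] [Fintype ι] {x : ι → R}
    {d : ι → ℕ} (hx : ∀ i, x i ^ d i = 0) :
    Ideal.span (Set.range x) ^ (∑ i, (d i - 1) + 1) = ⊥ := by
  classical
  rw [Ideal.span, Submodule.span_pow, Submodule.span_eq_bot]
  intro y hy
  obtain ⟨f, rfl⟩ := Set.mem_pow.mp hy
  choose σ hσ using fun j => (f j).2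
  rw [List.prod_ofFn]
  simp_rw [← hσ]
  obtain ⟨i, -, hi⟩ : ∃ i ∈ Finset.univ, d i - 1 < #{j | σ j = i} := by
    refine Finset.exists_lt_of_sum_lt ?_
    rw [← Finset.card_eq_sum_card_fiberwise fun j _ => Finset.mem_univ (σ j), Finset.card_univ,
      Fintype.card_fin]
    exact Nat.lt_succ_self _
  have hdvd : x i ^ d i ∣ ∏ j, x (σ j) := by
    rw [← Finset.prod_filter_mul_prod_filter_not Finset.univ (fun j => σ j = i)]
    refine Dvd.dvd.mul_right ?_ _
    rw [Finset.prod_congr rfl fun j hj => by rw [(Finset.mem_filter.mp hj).2], Finset.prod_const]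
    exact pow_dvd_pow _ (by omega)
  rw [hx, zero_dvd_iff] at hdvd
  exact hdvd

theorem Ideal.multiset_prod_mem_pow {R : Type*} [CommSemiring R] {I : Ideal R} {s : Multiset R}
    (hs : ∀ x ∈ s, x ∈ I) : s.prod ∈ I ^ card s := by
  induction s using Multiset.induction with
  | empty => simp
  | cons a s ih =>
    rw [Multiset.prod_cons, Multiset.card_cons, pow_succ']
    exact Ideal.mul_mem_mul (hs a (Multiset.mem_cons_self a s))
      (ih fun x hx => hs x (Multiset.mem_cons_of_mem hx))

theorem AddSubmonoid.closure_range_single_one_eq_top {ι : Type*} [Fintype ι] [DecidableEq ι]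
    {d : ι → ℕ} [∀ i, NeZero (d i)] :
    AddSubmonoid.closure (Set.range fun i => (Pi.single i 1 : (i : ι) → ZMod (d i))) = ⊤ := by
  refine eq_top_iff.mpr fun g _ => ?_
  rw [← Finset.univ_sum_single g]
  refine AddSubmonoid.sum_mem _ fun i _ => ?_
  rw [← ZMod.natCast_zmod_val (g i), ← nsmul_one, Pi.single_smul]
  exact AddSubmonoid.nsmul_mem _ (AddSubmonoid.subset_closure (Set.mem_range_self i)) _

theorem Multiset.count_zero_powerset {α : Type*} [DecidableEq α] (S : Multiset α) :
    count 0 S.powerset = 1 := by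
  induction S using Multiset.induction with
  | empty => simp
  | cons a S ih => simp [Multiset.powerset_cons, ih]

namespace AddMonoidAlgebra

variable {k G : Type*} [CommRing k] [AddCommMonoid G]

theorem one_sub_single_mem_of_mem_closure (I : Ideal k[G]) {s : Set G}
    (hs : ∀ g ∈ s, 1 - single g (1 : k) ∈ I) {g : G} (hg : g ∈ AddSubmonoid.closure s) :
    1 - single g (1 : k) ∈ I := by
  induction hg using AddSubmonoid.closure_induction with
  | mem g h => exact hs g h
  | zero => rw [← one_def, sub_self]; exact I.zero_mem
  | add g h _ _ hg hh =>
    have : 1 - single (g + h) (1 : k) = (1 - single g 1) + single g 1 * (1 - single h 1) := by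
      rw [mul_sub, single_mul_single, mul_one, mul_one]; ring
    rw [this]
    exact I.add_mem hg (I.mul_mem_left _ hh)

theorem prod_one_sub_single (S : Multiset G) :
    (S.map fun g => 1 - single g (1 : k)).prod =
      (S.powerset.map fun T => single T.sum ((-1 : k) ^ Multiset.card T)).sum := by
  induction S using Multiset.induction with
  | empty => simp [one_def]
  | cons a S ih =>
    rw [Multiset.map_cons, Multiset.prod_cons, ih, Multiset.powerset_cons, Multiset.map_add,
      Multiset.sum_add, Multiset.map_map, sub_mul, one_mul, ← Multiset.sum_map_mul_left,
      sub_eq_add_neg, ← Multiset.sum_map_neg]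
    congr 2
    refine Multiset.map_congr rfl fun T _ => ?_
    simp [single_mul_single, pow_succ]

theorem coeff_zero_prod_one_sub_single {S : Multiset G}
    (hS : ∀ T ≤ S, T.sum = 0 → T = 0) :
    ((S.map fun g => 1 - single g (1 : k)).prod).coeff 0 = 1 := by
  classical
  rw [prod_one_sub_single, ← coeffAddEquiv_apply, map_multiset_sum, Multiset.map_map,
    ← Finsupp.applyAddHom_apply, map_multiset_sum, Multiset.map_map,
    Multiset.sum_map_eq_nsmul_single 0, Multiset.count_zero_powerset, one_nsmul]
  · simp
  · intro T hT0 hT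
    have : T.sum ≠ 0 := fun h => hT0 (hS T (Multiset.mem_powerset.mp hT) h)
    simp [this]

end AddMonoidAlgebra

/- Olson: in `(ZMod p)[G]` the product of the `1 - single g 1` over `S` lies in `I ^ card S = 0`,
`I` the augmentation ideal, while its coefficient at `0` is `1` if `S` is zero-sum free. -/
open AddMonoidAlgebra in
theorem davenportBound_pi_zmod_of_primePow {p : ℕ} [Fact p.Prime] {ι : Type*} [Fintype ι]
    {d : ι → ℕ} (hd : ∀ i, ∃ a, d i = p ^ a) :
    DavenportBound ((i : ι) → ZMod (d i)) (∑ i, (d i - 1) + 1) := by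
  classical
  choose a ha using hd
  obtain rfl : d = fun i => p ^ a i := funext ha
  have : ∀ i, NeZero (p ^ a i) := fun i => ⟨pow_ne_zero _ (Fact.out : p.Prime).ne_zero⟩
  set G := (i : ι) → ZMod (p ^ a i)
  have : CharP (ZMod p)[G] p := charP_of_injective_algebraMap' (ZMod p) p
  let x : ι → (ZMod p)[G] := fun i => 1 - single (Pi.single i 1) 1
  have hx : ∀ i, x i ^ p ^ a i = 0 := fun i => by
    rw [sub_pow_char_pow, one_pow, single_pow, one_pow, ← Pi.single_smul, nsmul_one,
      ZMod.natCast_self, Pi.single_zero, ← one_def, sub_self]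
  have hmem : ∀ g : G, 1 - single g (1 : ZMod p) ∈ Ideal.span (Set.range x) := fun g =>
    one_sub_single_mem_of_mem_closure _ (s := Set.range fun i => Pi.single i 1)
      (by rintro _ ⟨i, rfl⟩; exact Ideal.subset_span ⟨i, rfl⟩)
      (by rw [AddSubmonoid.closure_range_single_one_eq_top]; trivial)
  intro S hS
  by_contra! hfree
  have hprod : (S.map fun g => 1 - single g (1 : ZMod p)).prod = 0 := by
    have hpow := Ideal.multiset_prod_mem_pow (I := Ideal.span (Set.range x))
      (s := S.map fun g => 1 - single g (1 : ZMod p))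
      (fun y hy => by obtain ⟨g, -, rfl⟩ := Multiset.mem_map.mp hy; exact hmem g)
    rw [Multiset.card_map] at hpow
    have := Ideal.pow_le_pow_right hS hpow
    rwa [Ideal.span_range_pow_eq_bot hx, Ideal.mem_bot] at this
  have := coeff_zero_prod_one_sub_single (k := ZMod p)
    (fun T hT hT0 => by_contra fun h => hfree T hT h hT0)
  rw [hprod] at this
  simp at this

theorem ZMod.eq_zero_of_castHom_gcd_eq_zero {M a b : ℕ} (hM : M ∣ a * b) (hab : a.Coprime b)
    (ha : a ≠ 0) (hb : b ≠ 0) {x : ZMod M}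
    (hxa : ZMod.castHom (Nat.gcd_dvd_left M a) (ZMod (M.gcd a)) x = 0)
    (hxb : ZMod.castHom (Nat.gcd_dvd_left M b) (ZMod (M.gcd b)) x = 0) : x = 0 := by
  have : NeZero M := ⟨fun h => by simp_all⟩
  rw [← ZMod.natCast_zmod_val x, map_natCast, ZMod.natCast_eq_zero_iff] at hxa hxb
  rw [← ZMod.natCast_zmod_val x, ZMod.natCast_eq_zero_iff]
  have := (hab.gcd_left M |>.gcd_right M).mul_dvd_of_dvd_of_dvd hxa hxb
  rwa [← hab.gcd_mul M, Nat.gcd_eq_left hM] at this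

def ZMod.dvdEmbedding {a b : ℕ} (h : a ∣ b) : ZMod a →+ ZMod b :=
  ZMod.lift a ⟨zmultiplesHom (ZMod b) ((b / a : ℕ) : ZMod b), by
    rw [zmultiplesHom_apply, natCast_zsmul, nsmul_eq_mul, ← Nat.cast_mul, Nat.mul_div_cancel' h,
      ZMod.natCast_self]⟩

theorem ZMod.dvdEmbedding_injective {a b : ℕ} (h : a ∣ b) (hb : b ≠ 0) :
    Function.Injective (ZMod.dvdEmbedding h) := by
  refine (ZMod.lift_injective a).mpr fun m hm => ?_
  rw [zmultiplesHom_apply, zsmul_eq_mul, ← Int.cast_natCast, ← Int.cast_mul,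
    ZMod.intCast_zmod_eq_zero_iff_dvd] at hm
  rw [ZMod.intCast_zmod_eq_zero_iff_dvd]
  obtain ⟨t, rfl⟩ := h
  have ha : 0 < a := Nat.pos_of_ne_zero (left_ne_zero_of_mul hb)
  rw [Nat.mul_div_cancel_left t ha, Nat.cast_mul] at hm
  exact (mul_dvd_mul_iff_right (by simpa using right_ne_zero_of_mul hb)).mp hm

theorem ZMod.dvd_of_exponent_dvd {ι L : Type*} [DecidableEq ι] [AddCommGroup L] {m : ι → ℕ}
    (e : L ≃+ ((i : ι) → ZMod (m i))) {n : ℕ} (hn : AddMonoid.exponent L ∣ n) (i : ι) :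
    m i ∣ n := by
  have h := AddMonoid.exponent_dvd_iff_forall_nsmul_eq_zero.mp hn (e.symm (Pi.single i 1))
  rwa [← _root_.map_nsmul, AddEquiv.map_eq_zero_iff, ← Pi.single_smul, nsmul_one,
    Pi.single_eq_zero_iff, ZMod.natCast_eq_zero_iff] at h

theorem davenportBound_pi_zmod {κ : Type*} [Fintype κ] {M : κ → ℕ} {q p a B : ℕ} [NeZero q]
    (hp : p.Prime) (hM : ∀ k, M k ∣ q * p ^ a) (hcop : q.Coprime (p ^ a))
    (hB : EtaCon (Fin (Fintype.card κ) → ZMod q) ≤ B) :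
    DavenportBound ((k : κ) → ZMod (M k)) (q * ∑ k, (Nat.gcd (M k) (p ^ a) - 1) + B) := by
  have : Fact p.Prime := ⟨hp⟩
  let Ψ₀ : ((k : κ) → ZMod (M k)) →+ (κ → ZMod q) :=
    AddMonoidHom.piMap fun k => (ZMod.dvdEmbedding (Nat.gcd_dvd_right (M k) q)).comp
      (ZMod.castHom (Nat.gcd_dvd_left (M k) q) _).toAddMonoidHom
  let reindex := AddEquiv.arrowCongr (Fintype.equivFin κ) (AddEquiv.refl (ZMod q))
  let Ψ := reindex.toAddMonoidHom.comp Ψ₀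
  let χ : ((k : κ) → ZMod (M k)) →+ ((k : κ) → ZMod (Nat.gcd (M k) (p ^ a))) :=
    AddMonoidHom.piMap fun k => (ZMod.castHom (Nat.gcd_dvd_left (M k) (p ^ a)) _).toAddMonoidHom
  have hχ : Function.Injective (χ.comp Ψ.ker.subtype) := by
    refine (injective_iff_map_eq_zero _).mpr fun ⟨x, hΨx⟩ hχx => Subtype.ext (funext fun k => ?_)
    refine ZMod.eq_zero_of_castHom_gcd_eq_zero (hM k) hcop (NeZero.ne q)
      (pow_ne_zero a hp.ne_zero) ?_ (congrFun hχx k)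
    have hΨx : Ψ₀ x = 0 := reindex.map_eq_zero_iff.mp hΨx
    exact ZMod.dvdEmbedding_injective _ (NeZero.ne q) (by simpa [Ψ₀] using congrFun hΨx k)
  have hOlson := davenportBound_pi_zmod_of_primePow (p := p) (d := fun k => Nat.gcd (M k) (p ^ a))
    fun k => ((Nat.dvd_prime_pow hp).mp (Nat.gcd_dvd_right _ _)).imp fun _ h => h.2
  have hshort (S : Multiset ((k : κ) → ZMod (M k))) (hS : B ≤ card S) :
      ∃ T ≤ S, T ≠ 0 ∧ card T ≤ q ∧ T.sum ∈ Ψ.ker := by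
    obtain ⟨T, hTS, hT0, hTcard, hTker⟩ := exists_short_sum_mem_ker_of_etaCon_le Ψ hB hS
    exact ⟨T, hTS, hT0, hTcard.trans (AddMonoid.exponent_fun_zmod_le (NeZero.ne q)), hTker⟩
  simpa using DavenportBound.of_blocks Ψ.ker hshort (hOlson.of_injective _ hχ)

theorem exists_prime_maxPP_eq {n : ℕ} (hn : n ≠ 0) :
    ∃ p, p.Prime ∧ maxPP n = p ^ n.factorization p := by
  have hmem : ∀ {P}, P ∈ n.divisors.filter IsPrimePow ↔ P ∣ n ∧ IsPrimePow P := by simp [hn]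
  unfold maxPP
  cases hmax : (n.divisors.filter IsPrimePow).max with
  | bot =>
    refine ⟨2, Nat.prime_two, ?_⟩
    rw [WithBot.unbotD_bot, Nat.factorization_eq_zero_of_not_dvd, pow_zero]
    intro h2
    have := Finset.max_eq_bot.mp hmax ▸ hmem.mpr ⟨h2, Nat.prime_two.isPrimePow⟩
    simp at this
  | coe P =>
    obtain ⟨hPn, p, a, hp, ha, rfl⟩ := hmem.mp (Finset.mem_of_max hmax)
    have hp' := hp.nat_prime
    have hle := (hp'.pow_dvd_iff_le_factorization hn).mp hPn
    refine ⟨p, hp', ?_⟩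
    rw [WithBot.unbotD_coe]
    refine le_antisymm (Nat.pow_le_pow_right hp'.pos hle) (Finset.le_max_of_eq ?_ hmax)
    exact hmem.mpr ⟨Nat.ordProj_dvd n p, ⟨p, _, hp, by omega, rfl⟩⟩

theorem maxPP_dvd {n : ℕ} (hn : n ≠ 0) : maxPP n ∣ n := by
  obtain ⟨p, -, hP⟩ := exists_prime_maxPP_eq hn
  exact hP ▸ Nat.ordProj_dvd n p

theorem davenportBound_pi_zmod_of_dvd {κ : Type*} [Fintype κ] {M : κ → ℕ} {n B : ℕ}
    (hn : n ≠ 0) (hM : ∀ k, M k ∣ n)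
    (hB : EtaCon (Fin (Fintype.card κ) → ZMod (n / maxPP n)) ≤ B) :
    DavenportBound ((k : κ) → ZMod (M k))
      (n / maxPP n * ∑ k, (Nat.gcd (M k) (maxPP n) - 1) + B) := by
  obtain ⟨p, hp, hP⟩ := exists_prime_maxPP_eq hn
  rw [hP] at hB ⊢
  have : NeZero (n / p ^ n.factorization p) := ⟨(Nat.ordCompl_pos p hn).ne'⟩
  refine davenportBound_pi_zmod hp (fun k => ?_) ((Nat.coprime_ordCompl hp hn).symm.pow_right _) hB
  rw [Nat.div_mul_cancel (Nat.ordProj_dvd n p)]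
  exact hM k

theorem blocks_bound_eq {n P r c s : ℕ} (hPn : P ∣ n) (hP : 1 ≤ P) (hq : 1 ≤ n / P)
    (hcr : r ≤ c) :
    n / P * (s + r * (P - 1)) + (c * (n / P - 1) + 1) =
      r * (n - 1) + 1 + (c - r) * (n / P - 1) + n / P * s := by
  obtain ⟨q, rfl⟩ := hPn
  rw [Nat.mul_div_cancel_left q hP] at hq ⊢
  zify [hP, hq, hcr, Nat.one_le_iff_ne_zero.mpr (mul_ne_zero (by omega) (by omega) : P * q ≠ 0)]
  ring

theorem stmt_14_general (L : Type*) [AddCommGroup L] (ℓ : ℕ) (m : Fin ℓ → ℕ)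
    (hiso : Nonempty (L ≃+ ((i : Fin ℓ) → ZMod (m i))))
    (n r : ℕ) (hn : 1 ≤ n) (hdvd : AddMonoid.exponent L ∣ n)
    (c : ℕ) (hcr : r ≤ c)
    (hc : ∀ k : ℕ, 1 ≤ k → EtaCon (Fin (ℓ + r) → ZMod k) ≤ c * (k - 1) + 1) :
    DavCon (L × (Fin r → ZMod n)) ≤
      r * (n - 1) + 1 + (c - r) * (n / maxPP n - 1) +
        (n / maxPP n) * ∑ i, (Nat.gcd (m i) (maxPP n) - 1) := by
  obtain ⟨e⟩ := hiso
  have hPn := maxPP_dvd (n := n) (by omega)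
  have hP : 1 ≤ maxPP n := Nat.pos_of_dvd_of_pos hPn hn
  have hq : 1 ≤ n / maxPP n := Nat.div_pos (Nat.le_of_dvd hn hPn) hP
  let M : Fin ℓ ⊕ Fin r → ℕ := Sum.elim m fun _ => n
  have hM : ∀ k, M k ∣ n := by
    rintro (i | j)
    exacts [ZMod.dvd_of_exponent_dvd e hdvd i, dvd_rfl]
  have hB := hc _ hq
  rw [← Fintype.card_fin ℓ, ← Fintype.card_fin r, ← Fintype.card_sum] at hB
  have hbound := (davenportBound_pi_zmod_of_dvd (by omega) hM hB).of_injective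
    ((e.prodCongr (AddEquiv.refl _)).trans
      (LinearEquiv.sumPiEquivProdPi ℕ _ _ fun k => ZMod (M k)).toAddEquiv.symm).toAddMonoidHom
    (AddEquiv.injective _)
  refine (davCon_le_of_davenportBound (by omega) hbound).trans_eq ?_
  simp only [Fintype.sum_sum_type, M, Sum.elim_inl, Sum.elim_inr, Nat.gcd_eq_right hPn,
    Finset.sum_const, Finset.card_univ, Fintype.card_fin, smul_eq_mul]
  exact blocks_bound_eq hPn hP hq hcr

/-- upper bound for `D(L ⊕ C_n^r)`. -/
theorem stmt_14 (L : Type*) [AddCommGroup L] [Fintype L] (ℓ : ℕ) (m : Fin ℓ → ℕ)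
    (hm : ∀ i, 1 < m i) (hchain : ∀ i j : Fin ℓ, i ≤ j → m i ∣ m j)
    (hiso : Nonempty (L ≃+ ((i : Fin ℓ) → ZMod (m i))))
    (n r : ℕ) (hn : 1 ≤ n) (hr : 1 ≤ r) (hdvd : AddMonoid.exponent L ∣ n)
    (c : ℕ) (hcr : r ≤ c)
    (hc : ∀ k : ℕ, 1 ≤ k → EtaCon (Fin (ℓ + r) → ZMod k) ≤ c * (k - 1) + 1) :
    DavCon (L × (Fin r → ZMod n)) ≤
      r * (n - 1) + 1 + (c - r) * (n / maxPP n - 1) +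
        (n / maxPP n) * ∑ i, (Nat.gcd (m i) (maxPP n) - 1) :=
  stmt_14_general L ℓ m hiso n r hn hdvd c hcr hc
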